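/- arXiv:2404.06319 — 2 statements merged into one kernel-verified Lean document; each statement's English description precedes it below -/
import Mathlib

section
/- If A is a nonnegative n×n real matrix with spectral norm strictly less than 1 and b ≤ 0 componentwise, then the absolute value equation Ax - |x| = b has a nonnegative solution. -/
open Matrix

/-- Componentwise absolute value of a vector. -/
noncomputable def absv {n : ℕ} (x : Fin n → ℝ) : Fin n → ℝ := fun i => |x i|

/-- Euclidean norm of a vector. -/
noncomputable def eucNorm {n : ℕ} (x : Fin n → ℝ) : ℝ := Real.sqrt (∑ i, x i ^ 2)

/-- Largest singular value (spectral / operator 2-norm). -/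
noncomputable def sigmaMax {n : ℕ} (A : Matrix (Fin n) (Fin n) ℝ) : ℝ :=
  sSup {r | ∃ x : Fin n → ℝ, eucNorm x = 1 ∧ r = eucNorm (A.mulVec x)}

/-- Smallest singular value. -/
noncomputable def sigmaMin {n : ℕ} (A : Matrix (Fin n) (Fin n) ℝ) : ℝ :=
  sInf {r | ∃ x : Fin n → ℝ, eucNorm x = 1 ∧ r = eucNorm (A.mulVec x)}

/-- Spectral radius of a real matrix (via its complex spectrum). -/
noncomputable def specRad {n : ℕ} (A : Matrix (Fin n) (Fin n) ℝ) : ENNReal :=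
  spectralRadius ℂ (A.map (Complex.ofReal ·))

lemma enorm_eq_norm {n : ℕ} (x : Fin n → ℝ) :
    eucNorm x = ‖(WithLp.equiv 2 (Fin n → ℝ)).symm x‖ := by
  rw [EuclideanSpace.norm_eq, eucNorm]
  congr 1
  refine Finset.sum_congr rfl fun i _ => ?_
  simp [Real.norm_eq_abs, sq_abs]

theorem stmt0 {n : ℕ} (A : Matrix (Fin n) (Fin n) ℝ) (b : Fin n → ℝ)
    (hA : ∀ i j, 0 ≤ A i j) (hnorm : sigmaMax A < 1) (hb : ∀ i, b i ≤ 0) :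
    ∃ x : Fin n → ℝ, (∀ i, 0 ≤ x i) ∧ A.mulVec x - absv x = b := by
  classical
  set e := WithLp.equiv 2 (Fin n → ℝ) with he
  set T : EuclideanSpace ℝ (Fin n) →L[ℝ] EuclideanSpace ℝ (Fin n) :=
    LinearMap.toContinuousLinearMap (Matrix.toEuclideanLin A) with hTdef
  have hTapp : ∀ y : EuclideanSpace ℝ (Fin n), T y = e.symm (A.mulVec (e y)) := fun y => rfl
  -- bound: ‖T y‖ ≤ sigmaMax A * ‖y‖
  have hbdd : BddAbove {r | ∃ x : Fin n → ℝ, eucNorm x = 1 ∧ r = eucNorm (A.mulVec x)} := by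
    refine ⟨‖T‖, ?_⟩
    rintro r ⟨x, hx, rfl⟩
    have h1 : eucNorm (A.mulVec x) = ‖T (e.symm x)‖ := by
      rw [hTapp, enorm_eq_norm]; simp; rfl
    have h2 : ‖e.symm x‖ = 1 := by rw [← enorm_eq_norm, hx]
    calc eucNorm (A.mulVec x) = ‖T (e.symm x)‖ := h1
      _ ≤ ‖T‖ * ‖e.symm x‖ := T.le_opNorm _
      _ = ‖T‖ := by rw [h2, mul_one]
  have hunit : ∀ y : EuclideanSpace ℝ (Fin n), ‖y‖ = 1 → ‖T y‖ ≤ sigmaMax A := by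
    intro y hy
    refine le_csSup hbdd ⟨e y, ?_, ?_⟩
    · rw [enorm_eq_norm]; exact hy
    · rw [hTapp, enorm_eq_norm]
  have hle : ∀ y : EuclideanSpace ℝ (Fin n), ‖T y‖ ≤ sigmaMax A * ‖y‖ := by
    intro y
    rcases eq_or_ne y 0 with rfl | hy
    · simp
    · have hny : (0:ℝ) < ‖y‖ := norm_pos_iff.mpr hy
      have hu : ‖(‖y‖⁻¹ • y)‖ = 1 := by
        rw [norm_smul, norm_inv, norm_norm, inv_mul_cancel₀ hny.ne']
      have := hunit _ hu
      rw [T.map_smul, norm_smul, norm_inv, norm_norm] at this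
      calc ‖T y‖ = ‖y‖ * (‖y‖⁻¹ * ‖T y‖) := by field_simp
        _ ≤ ‖y‖ * sigmaMax A := by
            exact mul_le_mul_of_nonneg_left this hny.le
        _ = sigmaMax A * ‖y‖ := mul_comm _ _
  set r : ℝ := max (sigmaMax A) 0 with hrdef
  have hr0 : 0 ≤ r := le_max_right _ _
  have hr1 : r < 1 := max_lt hnorm one_pos
  have hleR : ∀ y : EuclideanSpace ℝ (Fin n), ‖T y‖ ≤ r * ‖y‖ := fun y =>
    (hle y).trans (mul_le_mul_of_nonneg_right (le_max_left _ _) (norm_nonneg _))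
  set c : EuclideanSpace ℝ (Fin n) := e.symm (fun i => -b i) with hcdef
  set v : ℕ → EuclideanSpace ℝ (Fin n) := fun k => (fun y => T y)^[k] c with hvdef
  have hv0 : v 0 = c := rfl
  have hvs : ∀ k, v (k+1) = T (v k) := fun k => Function.iterate_succ_apply' _ _ _
  have hvnorm : ∀ k, ‖v k‖ ≤ r ^ k * ‖c‖ := by
    intro k
    induction k with
    | zero => simp [hv0]
    | succ k ih =>
        rw [hvs]
        calc ‖T (v k)‖ ≤ r * ‖v k‖ := hleR _
          _ ≤ r * (r ^ k * ‖c‖) := mul_le_mul_of_nonneg_left ih hr0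
          _ = r ^ (k+1) * ‖c‖ := by ring
  have hsum : Summable v := by
    refine Summable.of_norm_bounded ((summable_geometric_of_lt_one hr0 hr1).mul_right ‖c‖) ?_
    intro k; exact hvnorm k
  set x : EuclideanSpace ℝ (Fin n) := ∑' k, v k with hxdef
  have hTx : T x = ∑' k, v (k+1) := by
    rw [hxdef, T.map_tsum hsum]
    exact tsum_congr fun k => (hvs k).symm
  have hfix : x = c + T x := by
    rw [hTx, ← hv0]; exact Summable.tsum_eq_zero_add hsum
  have hvnn : ∀ k i, 0 ≤ v k i := by
    intro k
    induction k with
    | zero => intro i; show (0:ℝ) ≤ -b i; exact neg_nonneg.mpr (hb i)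
    | succ k ih =>
        intro i
        rw [hvs, hTapp]
        show (0:ℝ) ≤ A.mulVec (e (v k)) i
        simp only [Matrix.mulVec, dotProduct]
        exact Finset.sum_nonneg fun j _ => mul_nonneg (hA i j) (ih j)
  have hxnn : ∀ i, 0 ≤ x i := by
    intro i
    have : (EuclideanSpace.proj i : EuclideanSpace ℝ (Fin n) →L[ℝ] ℝ) x
        = ∑' k, (EuclideanSpace.proj i : EuclideanSpace ℝ (Fin n) →L[ℝ] ℝ) (v k) :=
      (EuclideanSpace.proj i : EuclideanSpace ℝ (Fin n) →L[ℝ] ℝ).map_tsum hsum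
    have hx : x i = ∑' k, v k i := by simpa [PiLp.proj_apply] using this
    rw [hx]
    exact tsum_nonneg fun k => hvnn k i
  refine ⟨fun i => x i, hxnn, ?_⟩
  have habs : absv (fun i => x i) = fun i => x i := by
    funext i; exact abs_of_nonneg (hxnn i)
  rw [habs]
  funext i
  have hi : x i = -b i + A.mulVec (fun j => x j) i := by
    conv_lhs => rw [hfix]
    rw [hTapp]
    rfl
  simp only [Pi.sub_apply]
  linarith [hi]
end

section
/- For a symmetric matrix A ∈ ℝ^{n×n}, the interval matrix [A - I, A + I] is regular if and only if no eigenvalue of A lies in the closed interval [-1, 1]. -/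
open Matrix

/-- If all eigenvalues of a symmetric real matrix exceed 1 in absolute value,
then `‖A x‖² > ‖x‖²` for every nonzero `x`. -/
lemma sum_sq_lt_sum_sq_mulVec {n : ℕ} {A : Matrix (Fin n) (Fin n) ℝ} (hH : A.IsHermitian)
    (h : ∀ i, 1 < |hH.eigenvalues i|) (x : Fin n → ℝ) (hx : x ≠ 0) :
    ∑ i, x i ^ 2 < ∑ i, (A *ᵥ x) i ^ 2 := by
  set b := hH.eigenvectorBasis with hb
  have hrepr : ∀ (z : EuclideanSpace ℝ (Fin n)), ∑ i, (z i)^2 = ∑ i, (b.repr z i)^2 := by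
    intro z
    have h1 : ‖z‖^2 = ∑ i, (z i)^2 := by
      rw [EuclideanSpace.norm_eq, Real.sq_sqrt (by positivity)]
      simp [sq_abs]
    have h2 : ‖b.repr z‖^2 = ∑ i, (b.repr z i)^2 := by
      rw [EuclideanSpace.norm_eq, Real.sq_sqrt (by positivity)]
      simp [sq_abs]
    rw [← h1, ← b.repr.norm_map z, h2]
  set c : Fin n → ℝ := fun i => b.repr (WithLp.toLp 2 x) i with hc
  have hAz : ∀ i, b.repr (WithLp.toLp 2 (A *ᵥ x)) i = hH.eigenvalues i * c i := by
    intro i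
    rw [b.repr_apply_apply, hc]
    simp only [b.repr_apply_apply]
    simp only [PiLp.inner_apply, RCLike.inner_apply, starRingEnd_apply, star_trivial]
    have step1 : ∑ j, (b i) j * (A *ᵥ x) j = ⇑(b i) ⬝ᵥ (A *ᵥ x) := rfl
    have step2 : ∑ j, (b i) j * x j = ⇑(b i) ⬝ᵥ x := rfl
    rw [Finset.sum_congr rfl fun j _ => mul_comm ((A *ᵥ x) j) ((b i).ofLp j),
      Finset.sum_congr rfl fun j _ => mul_comm (x j) ((b i).ofLp j)]
    rw [step1, step2, dotProduct_mulVec, ← mulVec_transpose]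
    have hsym : Aᵀ = A := by
      have := hH.eq
      rwa [conjTranspose_eq_transpose_of_trivial] at this
    rw [hsym, hH.mulVec_eigenvectorBasis, smul_dotProduct]
    rfl
  have e1 : ∑ i, x i ^ 2 = ∑ i, c i ^ 2 := hrepr (WithLp.toLp 2 x)
  have e2 : ∑ i, (A *ᵥ x) i ^ 2 = ∑ i, (hH.eigenvalues i * c i) ^ 2 := by
    rw [hrepr (WithLp.toLp 2 (A *ᵥ x))]
    exact Finset.sum_congr rfl fun i _ => by rw [hAz i]
  rw [e1, e2]
  have hcne : ∃ i, c i ≠ 0 := by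
    by_contra hcon
    push_neg at hcon
    apply hx
    have : b.repr (WithLp.toLp 2 x) = 0 := by
      ext i; exact hcon i
    exact congrArg WithLp.ofLp (b.repr.injective (show b.repr (WithLp.toLp 2 x) = b.repr 0 by rw [this]; simp))
  obtain ⟨i0, hi0⟩ := hcne
  have hsq : ∀ i, 1 < hH.eigenvalues i ^ 2 := by
    intro i
    have h1 : 1 < |hH.eigenvalues i| := h i
    nlinarith [sq_abs (hH.eigenvalues i)]
  apply Finset.sum_lt_sum
  · intro i _
    rw [mul_pow]
    nlinarith [hsq i, sq_nonneg (c i)]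
  · refine ⟨i0, Finset.mem_univ _, ?_⟩
    have h2 : 0 < c i0 ^ 2 := by positivity
    rw [mul_pow]
    nlinarith [hsq i0]

theorem stmt9 {n : ℕ} (A : Matrix (Fin n) (Fin n) ℝ) (hA : A.IsSymm) :
    (∀ B : Matrix (Fin n) (Fin n) ℝ,
        (∀ i j, |B i j - A i j| ≤ (1 : Matrix (Fin n) (Fin n) ℝ) i j) → B.det ≠ 0) ↔
      (∀ μ ∈ Set.Icc (-1 : ℝ) 1, μ ∉ spectrum ℝ A) := by
  have hH : A.IsHermitian := by
    rw [Matrix.IsHermitian, conjTranspose_eq_transpose_of_trivial]; exact hA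
  constructor
  · intro hreg μ hμ hspec
    rw [spectrum.mem_iff] at hspec
    rw [Matrix.isUnit_iff_isUnit_det, isUnit_iff_ne_zero, ne_eq, not_not] at hspec
    obtain ⟨v, hv0, hv⟩ := (Matrix.exists_mulVec_eq_zero_iff).mpr hspec
    have hdet : (A - μ • (1 : Matrix (Fin n) (Fin n) ℝ)).det = 0 := by
      rw [← Matrix.exists_mulVec_eq_zero_iff]
      refine ⟨v, hv0, ?_⟩
      have : (A - μ • 1) = -(algebraMap ℝ (Matrix (Fin n) (Fin n) ℝ) μ - A) := by
        rw [Algebra.algebraMap_eq_smul_one, neg_sub]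
      rw [this, neg_mulVec, hv, neg_zero]
    apply hreg (A - μ • 1) _ hdet
    intro i j
    have h1 : (A - μ • (1 : Matrix (Fin n) (Fin n) ℝ)) i j - A i j
        = -(μ * (1 : Matrix (Fin n) (Fin n) ℝ) i j) := by
      simp [Matrix.sub_apply, Matrix.smul_apply, smul_eq_mul]
    rw [h1, abs_neg, abs_mul]
    have hone : 0 ≤ (1 : Matrix (Fin n) (Fin n) ℝ) i j := by
      rcases eq_or_ne i j with h | h <;> simp [Matrix.one_apply, h]
    have habs1 : |(1 : Matrix (Fin n) (Fin n) ℝ) i j| = (1 : Matrix (Fin n) (Fin n) ℝ) i j :=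
      abs_of_nonneg hone
    rw [habs1]
    have hμ1 : |μ| ≤ 1 := abs_le.mpr ⟨hμ.1, hμ.2⟩
    exact mul_le_of_le_one_left hone hμ1
  · intro hsp B hB
    intro hdet
    obtain ⟨v, hv0, hv⟩ := (Matrix.exists_mulVec_eq_zero_iff).mpr hdet
    have heig : ∀ i, 1 < |hH.eigenvalues i| := by
      intro i
      by_contra hcon
      push_neg at hcon
      exact hsp _ (Set.mem_Icc.mpr (abs_le.mp hcon)) (hH.eigenvalues_mem_spectrum_real i)
    have hkey := sum_sq_lt_sum_sq_mulVec hH heig v hv0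
    -- off-diagonal entries of B coincide with A
    have hoff : ∀ i j, i ≠ j → B i j = A i j := by
      intro i j hij
      have := hB i j
      rw [Matrix.one_apply_ne hij] at this
      have := abs_nonpos_iff.mp this
      linarith [sub_eq_zero.mp this]
    have hAv : ∀ i, (A *ᵥ v) i = (A i i - B i i) * v i := by
      intro i
      have : (A *ᵥ v) i = ((A - B) *ᵥ v) i := by
        rw [Matrix.sub_mulVec, hv]
        simp
      rw [this, Matrix.mulVec, dotProduct]
      rw [Finset.sum_eq_single i]
      · simp [Matrix.sub_apply]
      · intro j _ hj
        rw [Matrix.sub_apply, hoff i j (Ne.symm hj)]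
        simp
      · simp
    have hub : ∑ i, (A *ᵥ v) i ^ 2 ≤ ∑ i, v i ^ 2 := by
      apply Finset.sum_le_sum
      intro i _
      rw [hAv i, mul_pow]
      have hdiag : |A i i - B i i| ≤ 1 := by
        have := hB i i
        rw [Matrix.one_apply_eq] at this
        rw [abs_sub_comm]
        exact this
      have hd2 : (A i i - B i i) ^ 2 ≤ 1 := by
        rw [← sq_abs]
        nlinarith [abs_nonneg (A i i - B i i)]
      nlinarith [hd2, sq_nonneg (v i)]
    linarith
end
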